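/- arXiv:math/0611836 — 2 statements merged into one kernel-verified Lean document; each statement's English description precedes it below -/
import Mathlib

section
/- Let α = log(5/3)/log 4. For every n ≥ 0, every f : V_n → ℝ, and every pair of distinct points x, y ∈ V_n, one has |f(x) − f(y)| ≤ 6 √(𝓔_n(f,f)) · ‖x−y‖^α. -/
open Set MeasureTheory Filter Topology
open scoped Classical ENNReal NNReal BoundedContinuousFunction

noncomputable section

/-- The plane, with the Euclidean norm. -/
abbrev Pt : Type := EuclideanSpace ℝ (Fin 2)

/-- The three vertexes of the initial equilateral triangle. -/
def ptA : Fin 3 → Pt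
  | 0 => (WithLp.equiv 2 (Fin 2 → ℝ)).symm ![0, 0]
  | 1 => (WithLp.equiv 2 (Fin 2 → ℝ)).symm ![1, 0]
  | 2 => (WithLp.equiv 2 (Fin 2 → ℝ)).symm ![1 / 2, Real.sqrt 3 / 2]

/-- The contraction `fᵢ(z) = (z + aᵢ)/2`. -/
def sgMap (i : Fin 3) (z : Pt) : Pt := (2 : ℝ)⁻¹ • (z + ptA i)

/-- The vertex sets `V_n`. -/
def Vn : ℕ → Finset Pt
  | 0 => {ptA 0, ptA 1, ptA 2}
  | n + 1 => (Vn n).image (sgMap 0) ∪ (Vn n).image (sgMap 1) ∪ (Vn n).image (sgMap 2)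

/-- `V* = ⋃ₙ Vₙ`. -/
def Vstar : Set Pt := ⋃ n, (Vn n : Set Pt)

/-- The Sierpinski gasket `V`, the closure of `V*`. -/
def sg : Set Pt := closure Vstar

lemma Vstar_subset_sg {x : Pt} (hx : x ∈ Vstar) : x ∈ sg :=
  subset_closure hx

lemma Vn_subset_sg {n : ℕ} {x : Pt} (hx : x ∈ Vn n) : x ∈ sg :=
  subset_closure (Set.mem_iUnion.mpr ⟨n, hx⟩)

/-- `{x,y}` is an edge of the graph `Γₙ`. -/
def isEdge (n : ℕ) (x y : Pt) : Prop := ‖x - y‖ = (2 : ℝ) ^ (-(n : ℤ))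

/-- The discrete energy form `𝓔ₙ(u,v) = (5/3)ⁿ Σ_{{x,y}∈Eₙ} (u(y)-u(x))(v(y)-v(x))`;
the sum over unordered pairs is written as half the sum over ordered pairs. -/
def energyBi (n : ℕ) (u v : Pt → ℝ) : ℝ :=
  (5 / 3 : ℝ) ^ n * (1 / 2) *
    ∑ x ∈ Vn n, ∑ y ∈ Vn n, if isEdge n x y then (u y - u x) * (v y - v x) else 0

/-- The discrete energy `𝓔ₙ(u,u)`. -/
def energy (n : ℕ) (u : Pt → ℝ) : ℝ := energyBi n u u

/-- The discrete Laplacian `Δₙ g(x) = 5ⁿ Σ_{y:{x,y}∈Eₙ} (g(y)-g(x))`. -/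
def discLap (n : ℕ) (g : Pt → ℝ) (x : Pt) : ℝ :=
  (5 : ℝ) ^ n * ∑ y ∈ Vn n, if isEdge n x y then g y - g x else 0

/-- A function on `V*` has finite energy if `supₙ 𝓔ₙ(u,u) < ∞`. -/
def FiniteEnergy (u : Pt → ℝ) : Prop := BddAbove (Set.range fun n => energy n u)

/-- The empirical vertex measure `μₙ`, giving mass `3⁻ⁿ` to each point of `Vₙ`. -/
def empMeas (n : ℕ) : Measure Pt :=
  ((3 : ℝ≥0∞) ^ n)⁻¹ • ∑ x ∈ Vn n, Measure.dirac x

/-- Extension by zero of a continuous function on the gasket. -/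
def sgExt (f : C(sg, ℝ)) (x : Pt) : ℝ := if hx : x ∈ sg then f ⟨x, hx⟩ else 0

/-- `h(k)! = h(1)⋯h(k)`, with `h(0)! = 1`. -/
def hfact (h : ℕ → ℝ) (k : ℕ) : ℝ := ∏ i ∈ Finset.range k, h (i + 1)

/-- The partition function `Z(φ) = Σₖ φᵏ/h(k)!`. -/
def Zfun (h : ℕ → ℝ) (φ : ℝ) : ℝ := ∑' k, φ ^ k / hfact h k

/-- The one-site marginal `p_φ(k) = Z(φ)⁻¹ φᵏ/h(k)!`. -/
def pmarg (h : ℕ → ℝ) (φ : ℝ) (k : ℕ) : ℝ := (Zfun h φ)⁻¹ * φ ^ k / hfact h k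

/-- The mean of the one-site marginal `p_φ`. -/
def meanFun (h : ℕ → ℝ) (φ : ℝ) : ℝ := ∑' k : ℕ, (k : ℝ) * pmarg h φ k

/-- The zero-range generator on `Ωₙ = ℕ^{Vₙ}`, summing over ordered pairs `(x,y)`
with `{x,y} ∈ Eₙ`. -/
def zrGen (n : ℕ) (h : ℕ → ℝ) (F : (↥(Vn n) → ℕ) → ℝ) (η : ↥(Vn n) → ℕ) : ℝ :=
  ∑ x : ↥(Vn n), ∑ y : ↥(Vn n),
    if isEdge n x.1 y.1 then
      h (η x) * (F (Function.update (Function.update η x (η x - 1)) y (η y + 1)) - F η)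
    else 0

def bary : Fin 3 → Pt → ℝ
  | 0, z => 1 - z 0 - z 1 / Real.sqrt 3
  | 1, z => z 0 - z 1 / Real.sqrt 3
  | 2, z => 2 * z 1 / Real.sqrt 3

lemma s3pos : (0:ℝ) < Real.sqrt 3 := Real.sqrt_pos.mpr (by norm_num)
lemma s3ne : (Real.sqrt 3) ≠ 0 := ne_of_gt s3pos
lemma s3sq : Real.sqrt 3 ^ 2 = 3 := Real.sq_sqrt (by norm_num)

lemma sgMap_apply (i : Fin 3) (z : Pt) (j : Fin 2) : sgMap i z j = (z j + ptA i j)/2 := by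
  simp [sgMap]; ring

lemma bary_sgMap (i k : Fin 3) (z : Pt) :
    bary i (sgMap k z) = (bary i z + if i = k then 1 else 0)/2 := by
  fin_cases i <;> fin_cases k <;>
    simp [bary, sgMap_apply, ptA, Matrix.cons_val_zero, Matrix.cons_val_one] <;>
    field_simp <;> ring

lemma bary_sum (z : Pt) : bary 0 z + bary 1 z + bary 2 z = 1 := by
  simp [bary]; field_simp; ring

lemma ext_of_bary {z w : Pt} (h1 : bary 1 z = bary 1 w) (h2 : bary 2 z = bary 2 w) :
    z = w := by
  simp [bary] at h1 h2
  have e1 : z 1 = w 1 := by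
    simpa [s3ne] using h2
  have e0 : z 0 = w 0 := by
    have := h1; rw [e1] at this; linarith
  ext j; fin_cases j <;> assumption

lemma bary_lip (i : Fin 3) (z w : Pt) : |bary i z - bary i w| ≤ 2 / Real.sqrt 3 * ‖z - w‖ := by
  obtain ⟨a, ha⟩ : ∃ a : ℝ, a = z 0 - w 0 := ⟨_, rfl⟩
  obtain ⟨b, hb⟩ : ∃ b : ℝ, b = z 1 - w 1 := ⟨_, rfl⟩
  have hn : ‖z - w‖ = Real.sqrt (a^2+b^2) := by
    rw [EuclideanSpace.norm_eq]; simp [Fin.sum_univ_two, ha, hb]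
  have hsq : (Real.sqrt (a^2+b^2))^2 = a^2+b^2 := Real.sq_sqrt (by positivity)
  have key : ∀ t : ℝ, t^2 ≤ (2/Real.sqrt 3 * Real.sqrt (a^2+b^2))^2 → |t| ≤ 2/Real.sqrt 3 * ‖z-w‖ := by
    intro t ht
    rw [hn]
    have h2 : (0:ℝ) ≤ 2/Real.sqrt 3 * Real.sqrt (a^2+b^2) := by positivity
    exact abs_le.mpr (abs_le_of_sq_le_sq' ht h2)
  obtain ⟨c, hcc⟩ : ∃ c : ℝ, c = b / Real.sqrt 3 := ⟨_, rfl⟩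
  have hb2 : b^2 = 3*c^2 := by rw [hcc]; field_simp; rw [s3sq]
  have hr : (2/Real.sqrt 3 * Real.sqrt (a^2+b^2))^2 = 4/3*(a^2+b^2) := by
    rw [mul_pow, div_pow, s3sq, hsq]; ring
  fin_cases i
  · show |bary 0 z - bary 0 w| ≤ _
    apply key
    have h : bary 0 z - bary 0 w = -a - c := by
      rw [ha, hcc, hb]; simp [bary]; ring
    rw [h, hr]
    nlinarith [sq_nonneg (a - 3*c), sq_nonneg (a + 3*c), hb2]
  · show |bary 1 z - bary 1 w| ≤ _
    apply key
    have h : bary 1 z - bary 1 w = a - c := by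
      rw [ha, hcc, hb]; simp [bary]; ring
    rw [h, hr]
    nlinarith [sq_nonneg (a - 3*c), sq_nonneg (a + 3*c), hb2]
  · show |bary 2 z - bary 2 w| ≤ _
    apply key
    have h : bary 2 z - bary 2 w = 2*c := by
      rw [hcc, hb]; simp [bary]; ring
    rw [h, hr]
    nlinarith [sq_nonneg a, hb2]

lemma sgMap_inj (i : Fin 3) : Function.Injective (sgMap i) := by
  intro z w h
  have h2 : z + ptA i = w + ptA i := by
    have := congrArg (fun v : Pt => (2:ℝ) • v) h
    simpa [sgMap, smul_smul] using this
  exact add_right_cancel h2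

lemma mem_Vn_succ {n : ℕ} {x : Pt} :
    x ∈ Vn (n+1) ↔ ∃ k : Fin 3, ∃ z ∈ Vn n, sgMap k z = x := by
  simp only [Vn, Finset.mem_union, Finset.mem_image]
  constructor
  · rintro ((⟨z,hz,h⟩|⟨z,hz,h⟩)|⟨z,hz,h⟩)
    exacts [⟨0,z,hz,h⟩, ⟨1,z,hz,h⟩, ⟨2,z,hz,h⟩]
  · rintro ⟨k,z,hz,h⟩
    fin_cases k
    exacts [Or.inl (Or.inl ⟨z,hz,h⟩), Or.inl (Or.inr ⟨z,hz,h⟩), Or.inr ⟨z,hz,h⟩]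

lemma sgMap_ptA_self (i : Fin 3) : sgMap i (ptA i) = ptA i := by
  ext j; rw [sgMap_apply]; ring

lemma sgMap_ptA_comm (i j : Fin 3) : sgMap i (ptA j) = sgMap j (ptA i) := by
  ext l; rw [sgMap_apply, sgMap_apply]; ring

lemma ptA_mem_Vn (i : Fin 3) (n : ℕ) : ptA i ∈ Vn n := by
  induction n with
  | zero => fin_cases i <;> simp [Vn]
  | succ n ih => exact mem_Vn_succ.mpr ⟨i, ptA i, ih, sgMap_ptA_self i⟩

lemma bary_ptA (i j : Fin 3) : bary i (ptA j) = if i = j then 1 else 0 := by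
  fin_cases i <;> fin_cases j <;> simp [bary, ptA] <;> field_simp <;> ring_nf

lemma bary_mem_nonneg {n : ℕ} {x : Pt} (hx : x ∈ Vn n) (i : Fin 3) : 0 ≤ bary i x := by
  induction n generalizing x with
  | zero =>
    simp [Vn] at hx
    rcases hx with h|h|h <;> subst h <;> rw [bary_ptA] <;> split <;> norm_num
  | succ n ih =>
    obtain ⟨k, z, hz, rfl⟩ := mem_Vn_succ.mp hx
    rw [bary_sgMap]
    have := ih hz
    split <;> linarith

lemma bary_mem_le_one {n : ℕ} {x : Pt} (hx : x ∈ Vn n) (i : Fin 3) : bary i x ≤ 1 := by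
  have h0 := bary_mem_nonneg hx 0
  have h1 := bary_mem_nonneg hx 1
  have h2 := bary_mem_nonneg hx 2
  have hs := bary_sum x
  fin_cases i
  · show bary 0 x ≤ 1; linarith
  · show bary 1 x ≤ 1; linarith
  · show bary 2 x ≤ 1; linarith

lemma bary_half {n : ℕ} {i : Fin 3} {p : Pt} (hp : p ∈ Vn n) :
    1/2 ≤ bary i (sgMap i p) := by
  rw [bary_sgMap]
  simp
  linarith [bary_mem_nonneg hp i]

lemma cell_inter {n : ℕ} {i j : Fin 3} (hij : i ≠ j) {x : Pt}
    (hi : ∃ p ∈ Vn n, sgMap i p = x) (hj : ∃ q ∈ Vn n, sgMap j q = x) :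
    x = sgMap i (ptA j) := by
  obtain ⟨p, hp, rfl⟩ := hi
  obtain ⟨q, hq, hqx⟩ := hj
  have hxi : 1/2 ≤ bary i (sgMap i p) := bary_half hp
  have hxj : 1/2 ≤ bary j (sgMap i p) := by rw [← hqx]; exact bary_half hq
  have hmem : sgMap i p ∈ Vn (n+1) := mem_Vn_succ.mpr ⟨i, p, hp, rfl⟩
  have h0 := bary_mem_nonneg hmem 0
  have h1 := bary_mem_nonneg hmem 1
  have h2 := bary_mem_nonneg hmem 2
  have hs := bary_sum (sgMap i p)
  apply ext_of_bary <;>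
  · fin_cases i <;> fin_cases j <;> simp_all [bary_sgMap, bary_ptA] <;> linarith

def Dsum (n : ℕ) (u : Pt → ℝ) : ℝ :=
  ∑ x ∈ Vn n, ∑ y ∈ Vn n, if isEdge n x y then (u y - u x)^2 else 0

lemma energy_eq (n : ℕ) (u : Pt → ℝ) : energy n u = (5/3:ℝ)^n * (1/2) * Dsum n u := by
  simp [energy, energyBi, Dsum, sq]

lemma Dsum_nonneg (n : ℕ) (u : Pt → ℝ) : 0 ≤ Dsum n u := by
  apply Finset.sum_nonneg; intro x _; apply Finset.sum_nonneg; intro y _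
  split
  · positivity
  · exact le_refl 0

lemma energy_nonneg (n : ℕ) (u : Pt → ℝ) : 0 ≤ energy n u := by
  rw [energy_eq]
  have := Dsum_nonneg n u
  positivity

lemma norm_sgMap_sub (i : Fin 3) (x y : Pt) : ‖sgMap i x - sgMap i y‖ = ‖x - y‖/2 := by
  have h : sgMap i x - sgMap i y = (2:ℝ)⁻¹ • (x - y) := by
    simp [sgMap, smul_sub, sub_smul]
  rw [h, norm_smul]; simp; ring

lemma two_zpow_succ (n : ℕ) : (2:ℝ) ^ (-((n+1:ℕ) : ℤ)) = (2:ℝ) ^ (-(n:ℤ)) / 2 := by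
  push_cast
  rw [neg_add, zpow_add₀ (by norm_num : (2:ℝ) ≠ 0)]
  norm_num
  ring

lemma isEdge_sgMap {n : ℕ} (i : Fin 3) {x y : Pt} :
    isEdge n x y ↔ isEdge (n+1) (sgMap i x) (sgMap i y) := by
  unfold isEdge
  rw [norm_sgMap_sub, two_zpow_succ]
  constructor
  · intro h; rw [h]
  · intro h
    have h2 : (0:ℝ) < 2 := by norm_num
    field_simp at h ⊢
    linarith

lemma isEdge_self_false (n : ℕ) (x : Pt) : ¬ isEdge n x x := by
  unfold isEdge
  simp
  positivity

lemma Dsum_cell (n : ℕ) (u : Pt → ℝ) (k : Fin 3) :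
    Dsum n (u ∘ sgMap k) =
      ∑ x ∈ (Vn n).image (sgMap k), ∑ y ∈ (Vn n).image (sgMap k),
        if isEdge (n+1) x y then (u y - u x)^2 else 0 := by
  rw [Finset.sum_image (fun x _ y _ h => sgMap_inj k h)]
  apply Finset.sum_congr rfl
  intro x _
  rw [Finset.sum_image (fun x _ y _ h => sgMap_inj k h)]
  apply Finset.sum_congr rfl
  intro y _
  by_cases h : isEdge n x y
  · rw [if_pos h, if_pos ((isEdge_sgMap k).mp h)]; simp
  · rw [if_neg h, if_neg (fun hc => h ((isEdge_sgMap k).mpr hc))]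

lemma sum_two_le {A B U : Finset (Pt × Pt)} {S : Pt × Pt → ℝ} (hS : ∀ p, 0 ≤ S p)
    (hA : A ⊆ U) (hB : B ⊆ U) (h0 : ∀ p ∈ A ∩ B, S p = 0) :
    ∑ p ∈ A, S p + ∑ p ∈ B, S p ≤ ∑ p ∈ U, S p := by
  have h1 := Finset.sum_union_inter (s₁ := A) (s₂ := B) (f := S)
  have h2 : ∑ p ∈ A ∩ B, S p = 0 := Finset.sum_eq_zero h0
  have h3 : ∑ p ∈ A ∪ B, S p ≤ ∑ p ∈ U, S p :=
    Finset.sum_le_sum_of_subset_of_nonneg (Finset.union_subset hA hB) (fun p _ _ => hS p)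
  linarith

def cellSq (n : ℕ) (k : Fin 3) : Finset (Pt × Pt) :=
  ((Vn n).image (sgMap k)) ×ˢ ((Vn n).image (sgMap k))

def edgeFn (n : ℕ) (u : Pt → ℝ) : Pt × Pt → ℝ :=
  fun p => if isEdge n p.1 p.2 then (u p.2 - u p.1)^2 else 0

lemma edgeFn_nonneg (n : ℕ) (u : Pt → ℝ) (p : Pt × Pt) : 0 ≤ edgeFn n u p := by
  unfold edgeFn; split
  · positivity
  · exact le_refl 0

lemma cellSq_subset (n : ℕ) (k : Fin 3) : cellSq n k ⊆ (Vn (n+1)) ×ˢ (Vn (n+1)) := by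
  apply Finset.product_subset_product <;>
  · intro x hx
    obtain ⟨z, hz, rfl⟩ := Finset.mem_image.mp hx
    exact mem_Vn_succ.mpr ⟨k, z, hz, rfl⟩

lemma cellSq_inter {n : ℕ} {i j : Fin 3} (hij : i ≠ j) (u : Pt → ℝ) :
    ∀ p ∈ cellSq n i ∩ cellSq n j, edgeFn (n+1) u p = 0 := by
  intro p hp
  rw [Finset.mem_inter] at hp
  obtain ⟨hpi, hpj⟩ := hp
  rw [cellSq, Finset.mem_product] at hpi hpj
  have e1 : p.1 = sgMap i (ptA j) := by
    apply cell_inter hij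
    · simpa [Finset.mem_image] using hpi.1
    · simpa [Finset.mem_image] using hpj.1
  have e2 : p.2 = sgMap i (ptA j) := by
    apply cell_inter hij
    · simpa [Finset.mem_image] using hpi.2
    · simpa [Finset.mem_image] using hpj.2
  unfold edgeFn
  rw [e1, e2]
  simp [isEdge_self_false]

lemma Dsum_cell' (n : ℕ) (u : Pt → ℝ) (k : Fin 3) :
    Dsum n (u ∘ sgMap k) = ∑ p ∈ cellSq n k, edgeFn (n+1) u p := by
  rw [Dsum_cell, cellSq, Finset.sum_product]
  rfl

lemma Dsum_full (n : ℕ) (u : Pt → ℝ) :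
    Dsum (n+1) u = ∑ p ∈ (Vn (n+1)) ×ˢ (Vn (n+1)), edgeFn (n+1) u p := by
  rw [Finset.sum_product]
  rfl

lemma Dsum_one_le (n : ℕ) (u : Pt → ℝ) (k : Fin 3) :
    Dsum n (u ∘ sgMap k) ≤ Dsum (n+1) u := by
  rw [Dsum_cell', Dsum_full]
  exact Finset.sum_le_sum_of_subset_of_nonneg (cellSq_subset n k)
    (fun p _ _ => edgeFn_nonneg _ _ p)

lemma Dsum_pair_le (n : ℕ) (u : Pt → ℝ) {i j : Fin 3} (hij : i ≠ j) :
    Dsum n (u ∘ sgMap i) + Dsum n (u ∘ sgMap j) ≤ Dsum (n+1) u := by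
  rw [Dsum_cell', Dsum_cell', Dsum_full]
  exact sum_two_le (edgeFn_nonneg _ _) (cellSq_subset n i) (cellSq_subset n j)
    (cellSq_inter hij u)

lemma Dsum_tri_le (n : ℕ) (u : Pt → ℝ) :
    Dsum n (u ∘ sgMap 0) + Dsum n (u ∘ sgMap 1) + Dsum n (u ∘ sgMap 2) ≤ Dsum (n+1) u := by
  rw [Dsum_cell', Dsum_cell', Dsum_cell', Dsum_full]
  have h01 := Finset.sum_union_inter (s₁ := cellSq n 0) (s₂ := cellSq n 1) (f := edgeFn (n+1) u)
  have z01 : ∑ p ∈ cellSq n 0 ∩ cellSq n 1, edgeFn (n+1) u p = 0 :=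
    Finset.sum_eq_zero (cellSq_inter (by decide) u)
  have step : ∑ p ∈ cellSq n 0 ∪ cellSq n 1, edgeFn (n+1) u p + ∑ p ∈ cellSq n 2, edgeFn (n+1) u p
      ≤ ∑ p ∈ (Vn (n+1)) ×ˢ (Vn (n+1)), edgeFn (n+1) u p := by
    apply sum_two_le (edgeFn_nonneg _ _)
      (Finset.union_subset (cellSq_subset n 0) (cellSq_subset n 1)) (cellSq_subset n 2)
    intro p hp
    rw [Finset.mem_inter, Finset.mem_union] at hp
    rcases hp with ⟨h02 | h12, h2⟩
    · exact cellSq_inter (show (0:Fin 3) ≠ 2 by decide) u p (Finset.mem_inter.mpr ⟨h02, h2⟩)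
    · exact cellSq_inter (show (1:Fin 3) ≠ 2 by decide) u p (Finset.mem_inter.mpr ⟨h12, h2⟩)
  linarith

lemma ptA_ne_01 : ptA 0 ≠ ptA 1 := by
  intro h
  have h0 : ptA 0 0 = ptA 1 0 := by rw [h]
  have : (0:ℝ) = 1 := h0
  norm_num at this

lemma ptA_ne_02 : ptA 0 ≠ ptA 2 := by
  intro h
  have h0 : ptA 0 0 = ptA 2 0 := by rw [h]
  have : (0:ℝ) = 1/2 := h0
  norm_num at this

lemma ptA_ne_12 : ptA 1 ≠ ptA 2 := by
  intro h
  have h0 : ptA 1 0 = ptA 2 0 := by rw [h]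
  have : (1:ℝ) = 1/2 := h0
  norm_num at this

lemma norm_eq_coord (x y : Pt) : ‖x - y‖ = Real.sqrt ((x 0 - y 0)^2 + (x 1 - y 1)^2) := by
  rw [EuclideanSpace.norm_eq]; simp [Fin.sum_univ_two]

lemma norm01 : ‖ptA 0 - ptA 1‖ = 1 := by
  rw [norm_eq_coord]
  show Real.sqrt (((0:ℝ) - 1)^2 + ((0:ℝ) - 0)^2) = 1
  norm_num

lemma norm02 : ‖ptA 0 - ptA 2‖ = 1 := by
  rw [norm_eq_coord]
  show Real.sqrt (((0:ℝ) - 1/2)^2 + ((0:ℝ) - Real.sqrt 3/2)^2) = 1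
  rw [show ((0:ℝ) - 1/2)^2 + ((0:ℝ) - Real.sqrt 3/2)^2 = 1/4 + Real.sqrt 3^2/4 by ring,
    s3sq]
  norm_num

lemma norm12 : ‖ptA 1 - ptA 2‖ = 1 := by
  rw [norm_eq_coord]
  show Real.sqrt (((1:ℝ) - 1/2)^2 + ((0:ℝ) - Real.sqrt 3/2)^2) = 1
  rw [show ((1:ℝ) - 1/2)^2 + ((0:ℝ) - Real.sqrt 3/2)^2 = 1/4 + Real.sqrt 3^2/4 by ring,
    s3sq]
  norm_num

lemma isEdge_zero_iff (x y : Pt) : isEdge 0 x y ↔ ‖x - y‖ = 1 := by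
  unfold isEdge; norm_num

lemma edge01 : isEdge 0 (ptA 0) (ptA 1) := (isEdge_zero_iff _ _).mpr norm01
lemma edge02 : isEdge 0 (ptA 0) (ptA 2) := (isEdge_zero_iff _ _).mpr norm02
lemma edge12 : isEdge 0 (ptA 1) (ptA 2) := (isEdge_zero_iff _ _).mpr norm12
lemma edge10 : isEdge 0 (ptA 1) (ptA 0) := (isEdge_zero_iff _ _).mpr (by rw [norm_sub_rev]; exact norm01)
lemma edge20 : isEdge 0 (ptA 2) (ptA 0) := (isEdge_zero_iff _ _).mpr (by rw [norm_sub_rev]; exact norm02)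
lemma edge21 : isEdge 0 (ptA 2) (ptA 1) := (isEdge_zero_iff _ _).mpr (by rw [norm_sub_rev]; exact norm12)

lemma sum3 (f : Pt → ℝ) : ∑ x ∈ Vn 0, f x = f (ptA 0) + f (ptA 1) + f (ptA 2) := by
  rw [show Vn 0 = {ptA 0, ptA 1, ptA 2} from rfl]
  rw [Finset.sum_insert (by simp [ptA_ne_01, ptA_ne_02]),
    Finset.sum_insert (by simp [ptA_ne_12]), Finset.sum_singleton]
  ring

lemma energy_zero (u : Pt → ℝ) :
    energy 0 u = (u (ptA 1) - u (ptA 0))^2 + (u (ptA 2) - u (ptA 0))^2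
      + (u (ptA 2) - u (ptA 1))^2 := by
  rw [energy_eq]
  have h : Dsum 0 u = 2*((u (ptA 1) - u (ptA 0))^2 + (u (ptA 2) - u (ptA 0))^2
      + (u (ptA 2) - u (ptA 1))^2) := by
    unfold Dsum
    simp only [sum3]
    simp [edge01, edge02, edge10, edge12, edge20, edge21, isEdge_self_false]
    ring
  rw [h]
  ring

set_option maxHeartbeats 1000000 in
lemma tri0 (u : Pt → ℝ) :
    energy 0 u ≤ (5/3) * (energy 0 (u ∘ sgMap 0) + energy 0 (u ∘ sgMap 1)
      + energy 0 (u ∘ sgMap 2)) := by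
  rw [energy_zero, energy_zero, energy_zero, energy_zero]
  simp only [Function.comp_apply]
  rw [sgMap_ptA_self 0, sgMap_ptA_self 1, sgMap_ptA_self 2,
    show sgMap 1 (ptA 0) = sgMap 0 (ptA 1) from sgMap_ptA_comm 1 0,
    show sgMap 2 (ptA 0) = sgMap 0 (ptA 2) from sgMap_ptA_comm 2 0,
    show sgMap 2 (ptA 1) = sgMap 1 (ptA 2) from sgMap_ptA_comm 2 1]
  obtain ⟨A, hA⟩ : ∃ t, t = u (ptA 0) := ⟨_, rfl⟩
  obtain ⟨B, hB⟩ : ∃ t, t = u (ptA 1) := ⟨_, rfl⟩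
  obtain ⟨C, hC⟩ : ∃ t, t = u (ptA 2) := ⟨_, rfl⟩
  obtain ⟨P, hP⟩ : ∃ t, t = u (sgMap 0 (ptA 1)) := ⟨_, rfl⟩
  obtain ⟨Q, hQ⟩ : ∃ t, t = u (sgMap 0 (ptA 2)) := ⟨_, rfl⟩
  obtain ⟨R, hR⟩ : ∃ t, t = u (sgMap 1 (ptA 2)) := ⟨_, rfl⟩
  rw [← hA, ← hB, ← hC, ← hP, ← hQ, ← hR]
  nlinarith [sq_nonneg (5*P - 2*A - 2*B - C), sq_nonneg (5*Q - 2*A - 2*C - B),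
    sq_nonneg (5*R - 2*B - 2*C - A), sq_nonneg (5*P - 5*Q + C - B),
    sq_nonneg (5*Q - 5*R + B - A), sq_nonneg (5*P - 5*R + C - A)]

lemma energy_mono_zero (n : ℕ) (u : Pt → ℝ) : energy 0 u ≤ energy n u := by
  induction n generalizing u with
  | zero => exact le_refl _
  | succ n ih =>
    have step1 : energy 0 u ≤ (5/3) * (energy n (u ∘ sgMap 0) + energy n (u ∘ sgMap 1)
        + energy n (u ∘ sgMap 2)) := by
      refine le_trans (tri0 u) ?_
      have := ih (u ∘ sgMap 0)
      have := ih (u ∘ sgMap 1)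
      have := ih (u ∘ sgMap 2)
      nlinarith
    refine le_trans step1 ?_
    have hd := Dsum_tri_le n u
    rw [energy_eq, energy_eq, energy_eq, energy_eq]
    have hp : (0:ℝ) < (5/3:ℝ)^n := by positivity
    have key : (5/3:ℝ) * ((5/3:ℝ)^n * (1/2) * (Dsum n (u ∘ sgMap 0) + Dsum n (u ∘ sgMap 1)
        + Dsum n (u ∘ sgMap 2))) ≤ (5/3:ℝ)^(n+1) * (1/2) * Dsum (n+1) u := by
      rw [pow_succ]
      nlinarith
    calc (5/3:ℝ) * ((5/3:ℝ)^n * (1/2) * Dsum n (u ∘ sgMap 0) + (5/3:ℝ)^n * (1/2) * Dsum n (u ∘ sgMap 1)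
          + (5/3:ℝ)^n * (1/2) * Dsum n (u ∘ sgMap 2))
        = (5/3:ℝ) * ((5/3:ℝ)^n * (1/2) * (Dsum n (u ∘ sgMap 0) + Dsum n (u ∘ sgMap 1)
          + Dsum n (u ∘ sgMap 2))) := by ring
      _ ≤ _ := key

lemma corner_bound (n : ℕ) (v : Pt → ℝ) (i k : Fin 3) :
    (v (ptA k) - v (ptA i))^2 ≤ energy n v := by
  refine le_trans ?_ (energy_mono_zero n v)
  rw [energy_zero]
  have hints := And.intro (sq_nonneg (v (ptA 1) - v (ptA 0)))
    (And.intro (sq_nonneg (v (ptA 2) - v (ptA 0))) (sq_nonneg (v (ptA 2) - v (ptA 1))))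
  obtain ⟨H1, H2, H3⟩ := hints
  fin_cases i <;> fin_cases k
  · show (v (ptA 0) - v (ptA 0))^2 ≤ _; nlinarith
  · show (v (ptA 1) - v (ptA 0))^2 ≤ _; nlinarith
  · show (v (ptA 2) - v (ptA 0))^2 ≤ _; nlinarith
  · show (v (ptA 0) - v (ptA 1))^2 ≤ _; nlinarith
  · show (v (ptA 1) - v (ptA 1))^2 ≤ _; nlinarith
  · show (v (ptA 2) - v (ptA 1))^2 ≤ _; nlinarith
  · show (v (ptA 0) - v (ptA 2))^2 ≤ _; nlinarith
  · show (v (ptA 1) - v (ptA 2))^2 ≤ _; nlinarith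
  · show (v (ptA 2) - v (ptA 2))^2 ≤ _; nlinarith

def alp : ℝ := Real.log (5/3) / Real.log 4

lemma log53_pos : 0 < Real.log (5/3) := Real.log_pos (by norm_num)
lemma log2_pos : 0 < Real.log 2 := Real.log_pos (by norm_num)

lemma log_four : Real.log 4 = 2 * Real.log 2 := by
  rw [show (4:ℝ) = 2^2 by norm_num, Real.log_pow]
  push_cast; ring

lemma alp_pos : 0 < alp := by
  apply div_pos log53_pos
  rw [log_four]; linarith [log2_pos]

lemma alp_le_one : alp ≤ 1 := by
  rw [alp, div_le_one (by rw [log_four]; linarith [log2_pos])]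
  exact Real.log_le_log (by norm_num) (by norm_num)

lemma two_rpow_alp : (2:ℝ) ^ alp = Real.sqrt (5/3) := by
  rw [Real.rpow_def_of_pos (by norm_num : (0:ℝ) < 2),
    Real.sqrt_eq_rpow, Real.rpow_def_of_pos (by norm_num : (0:ℝ) < 5/3)]
  congr 1
  rw [alp, log_four]
  field_simp

lemma half_rpow_beta : ((1:ℝ)/2) ^ (2*alp) = 3/5 := by
  rw [Real.rpow_def_of_pos (by norm_num : (0:ℝ) < 1/2)]
  have hlog : Real.log (1/2) = -Real.log 2 := by
    rw [show (1:ℝ)/2 = 2⁻¹ by norm_num, Real.log_inv]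
  have harg : Real.log (1/2) * (2*alp) = -Real.log (5/3) := by
    rw [hlog, alp, log_four]
    field_simp
  rw [harg, Real.exp_neg, Real.exp_log (by norm_num : (0:ℝ) < 5/3)]
  norm_num

lemma sqrt_cs {X Y p q : ℝ} (hX : 0 ≤ X) (hY : 0 ≤ Y) (hp : 0 ≤ p) (hq : 0 ≤ q) :
    Real.sqrt X * p + Real.sqrt Y * q ≤ Real.sqrt (X + Y) * Real.sqrt (p^2 + q^2) := by
  have hL : 0 ≤ Real.sqrt X * p + Real.sqrt Y * q := by positivity
  have h1 : (Real.sqrt X * p + Real.sqrt Y * q)^2 ≤ (X + Y) * (p^2 + q^2) := by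
    nlinarith [sq_nonneg (Real.sqrt X * q - Real.sqrt Y * p), Real.sq_sqrt hX, Real.sq_sqrt hY,
      Real.sqrt_nonneg X, Real.sqrt_nonneg Y]
  calc Real.sqrt X * p + Real.sqrt Y * q = Real.sqrt ((Real.sqrt X * p + Real.sqrt Y * q)^2) :=
        (Real.sqrt_sq hL).symm
    _ ≤ Real.sqrt ((X + Y) * (p^2 + q^2)) := Real.sqrt_le_sqrt h1
    _ = Real.sqrt (X + Y) * Real.sqrt (p^2 + q^2) := Real.sqrt_mul (by linarith) _

lemma concave_diff {β : ℝ} (h0 : 0 < β) (h1 : β < 1) {a : ℝ} (ha : 0 ≤ a) (ha2 : a ≤ 1/2) :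
    1 - ((1:ℝ)/2)^β ≤ (a + 1/2)^β - a^β := by
  have hconc := (Real.strictConcaveOn_rpow h0 h1).concaveOn
  set f : ℝ → ℝ := fun x : ℝ => x ^ β with hf
  have hden : (0:ℝ) < 1 - a := by linarith
  set lam : ℝ := 1/(2*(1-a)) with hlam
  have hlam0 : 0 ≤ lam := by positivity
  have hlam1 : 0 ≤ 1 - lam := by
    rw [hlam, sub_nonneg, div_le_one (by linarith)]
    linarith
  have e1 : lam * 1 + (1 - lam) * a = a + 1/2 := by
    rw [hlam]; field_simp; ring
  have e2 : lam * a + (1 - lam) * 1 = 1/2 := by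
    rw [hlam]; field_simp; ring
  have m1 : (1:ℝ) ∈ Set.Ici (0:ℝ) := by norm_num
  have ma : a ∈ Set.Ici (0:ℝ) := ha
  have c1 := hconc.2 m1 ma hlam0 hlam1 (by ring)
  have c2 := hconc.2 ma m1 hlam0 hlam1 (by ring)
  rw [smul_eq_mul, smul_eq_mul, smul_eq_mul, smul_eq_mul] at c1 c2
  rw [e1] at c1
  rw [e2] at c2
  have hone : f 1 = 1 := by rw [hf]; simp
  have hfa : f a = a^β := rfl
  have hfa2 : f (a + 1/2) = (a+1/2)^β := rfl
  have hhalf : f (1/2) = ((1:ℝ)/2)^β := by norm_num [hf]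
  rw [hone, hfa, hfa2] at c1
  rw [hone, hfa, hhalf] at c2
  linarith

lemma beta_pos : 0 < 2 * alp := by linarith [alp_pos]

lemma beta_lt_one : 2 * alp < 1 := by
  rw [alp, log_four]
  rw [show (2:ℝ) * (Real.log (5/3) / (2 * Real.log 2)) = Real.log (5/3) / Real.log 2 by
    field_simp]
  rw [div_lt_one log2_pos]
  have := Real.log_lt_log (by norm_num : (0:ℝ) < 5/3) (by norm_num : (5/3:ℝ) < 2)
  linarith

lemma rpow_twice {w : ℝ} (hw : 0 ≤ w) : (w ^ alp)^2 = w ^ (2*alp) := by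
  rw [show (2:ℝ)*alp = alp*2 by ring, Real.rpow_mul hw, ← Real.rpow_natCast (w ^ alp) 2]
  norm_num

lemma energy_cell_le (n : ℕ) (u : Pt → ℝ) (k : Fin 3) :
    energy n (u ∘ sgMap k) ≤ (3/5) * energy (n+1) u := by
  have h := Dsum_one_le n u k
  have hp : (0:ℝ) < (5/3:ℝ)^n := by positivity
  rw [energy_eq, energy_eq, pow_succ]
  nlinarith

lemma energy_pair_le (n : ℕ) (u : Pt → ℝ) {i j : Fin 3} (hij : i ≠ j) :
    energy n (u ∘ sgMap i) + energy n (u ∘ sgMap j) ≤ (3/5) * energy (n+1) u := by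
  have h := Dsum_pair_le n u hij
  have hp : (0:ℝ) < (5/3:ℝ)^n := by positivity
  rw [energy_eq, energy_eq, energy_eq, pow_succ]
  nlinarith

lemma sqrt_energy_cell (n : ℕ) (u : Pt → ℝ) (k : Fin 3) :
    Real.sqrt (energy n (u ∘ sgMap k)) ≤ Real.sqrt (3/5) * Real.sqrt (energy (n+1) u) := by
  rw [← Real.sqrt_mul (by norm_num : (0:ℝ) ≤ 3/5)]
  exact Real.sqrt_le_sqrt (energy_cell_le n u k)

lemma abs_le_sqrt_energy {n : ℕ} {v : Pt → ℝ} {t : ℝ} (h : t^2 ≤ energy n v) :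
    |t| ≤ Real.sqrt (energy n v) := by
  rw [← Real.sqrt_sq_eq_abs]
  exact Real.sqrt_le_sqrt h

lemma mem_V0 {x : Pt} (hx : x ∈ Vn 0) : ∃ j : Fin 3, x = ptA j := by
  rw [show Vn 0 = {ptA 0, ptA 1, ptA 2} from rfl] at hx
  simp at hx
  rcases hx with h|h|h
  exacts [⟨0, h⟩, ⟨1, h⟩, ⟨2, h⟩]

lemma lemQ : ∀ n : ℕ, ∀ u : Pt → ℝ, ∀ i : Fin 3, ∀ x ∈ Vn n,
    |u x - u (ptA i)| ≤ Real.sqrt (3/2) * Real.sqrt (energy n u) * (1 - bary i x) ^ alp := by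
  intro n
  induction n with
  | zero =>
    intro u i x hx
    obtain ⟨j, rfl⟩ := mem_V0 hx
    by_cases hji : j = i
    · subst hji
      rw [bary_ptA, if_pos rfl, sub_self, sub_self, abs_zero]
      have h1 : (0:ℝ) ≤ (1 - (1:ℝ)) ^ alp := Real.rpow_nonneg (by norm_num) _
      positivity
    · rw [bary_ptA, if_neg (fun h => hji h.symm), sub_zero, Real.one_rpow, mul_one]
      have h1 : |u (ptA j) - u (ptA i)| ≤ Real.sqrt (energy 0 u) :=
        abs_le_sqrt_energy (corner_bound 0 u i j)
      have h2 : (1:ℝ) ≤ Real.sqrt (3/2) := by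
        rw [show (1:ℝ) = Real.sqrt 1 by rw [Real.sqrt_one]]
        exact Real.sqrt_le_sqrt (by norm_num)
      nlinarith [Real.sqrt_nonneg (energy 0 u)]
  | succ n ih =>
    intro u i x hx
    obtain ⟨k, z, hz, rfl⟩ := mem_Vn_succ.mp hx
    have hz0 : 0 ≤ bary i z := bary_mem_nonneg hz i
    have hz1 : bary i z ≤ 1 := bary_mem_le_one hz i
    have hE : 0 ≤ energy (n+1) u := energy_nonneg _ _
    have hEc : 0 ≤ energy n (u ∘ sgMap k) := energy_nonneg _ _
    by_cases hk : k = i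
    · subst hk
      have h1 := ih (u ∘ sgMap k) k z hz
      simp only [Function.comp_apply] at h1
      rw [sgMap_ptA_self] at h1
      have hb : bary k (sgMap k z) = (bary k z + 1)/2 := by
        rw [bary_sgMap, if_pos rfl]
      have hw : 1 - bary k z = 2 * (1 - bary k (sgMap k z)) := by rw [hb]; ring
      rw [hw] at h1
      have hwx : 0 ≤ 1 - bary k (sgMap k z) := by
        have := bary_mem_le_one hx k
        linarith
      rw [Real.mul_rpow (by norm_num) hwx, two_rpow_alp] at h1
      refine le_trans h1 ?_
      have hs := sqrt_energy_cell n u k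
      have hr : (0:ℝ) ≤ (1 - bary k (sgMap k z)) ^ alp := Real.rpow_nonneg hwx _
      have key : Real.sqrt (energy n (u ∘ sgMap k)) * Real.sqrt (5/3)
          ≤ Real.sqrt (energy (n+1) u) := by
        have h35 : Real.sqrt (3/5) * Real.sqrt (5/3) = 1 := by
          rw [← Real.sqrt_mul (by norm_num : (0:ℝ) ≤ 3/5)]
          norm_num
        calc Real.sqrt (energy n (u ∘ sgMap k)) * Real.sqrt (5/3)
            ≤ (Real.sqrt (3/5) * Real.sqrt (energy (n+1) u)) * Real.sqrt (5/3) := by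
              apply mul_le_mul_of_nonneg_right hs (Real.sqrt_nonneg _)
          _ = (Real.sqrt (3/5) * Real.sqrt (5/3)) * Real.sqrt (energy (n+1) u) := by ring
          _ = Real.sqrt (energy (n+1) u) := by rw [h35]; ring
      calc Real.sqrt (3/2) * Real.sqrt (energy n (u ∘ sgMap k))
            * (Real.sqrt (5/3) * (1 - bary k (sgMap k z)) ^ alp)
          = Real.sqrt (3/2) * (Real.sqrt (energy n (u ∘ sgMap k)) * Real.sqrt (5/3))
            * (1 - bary k (sgMap k z)) ^ alp := by ring
        _ ≤ Real.sqrt (3/2) * Real.sqrt (energy (n+1) u) * (1 - bary k (sgMap k z)) ^ alp := by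
            apply mul_le_mul_of_nonneg_right _ hr
            apply mul_le_mul_of_nonneg_left key (Real.sqrt_nonneg _)
    · -- k ≠ i
      have h1 := ih (u ∘ sgMap k) i z hz
      simp only [Function.comp_apply] at h1
      have h2' : (((u ∘ sgMap i) (ptA k)) - ((u ∘ sgMap i) (ptA i)))^2
          ≤ energy n (u ∘ sgMap i) := corner_bound n (u ∘ sgMap i) i k
      have h2 : |u (sgMap k (ptA i)) - u (ptA i)| ≤ Real.sqrt (energy n (u ∘ sgMap i)) := by
        have := abs_le_sqrt_energy h2'
        simp only [Function.comp_apply] at this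
        rw [sgMap_ptA_self, ← sgMap_ptA_comm] at this
        exact this
      -- w = 1 - bary i x, and 1 - bary i z = 2w - 1
      set w : ℝ := 1 - bary i (sgMap k z) with hwdef
      have hbx : bary i (sgMap k z) = bary i z / 2 := by
        rw [bary_sgMap, if_neg (fun h => hk h.symm)]; ring
      have hwhalf : 1/2 ≤ w := by
        rw [hwdef, hbx]; linarith
      have hwone : w ≤ 1 := by
        rw [hwdef, hbx]; linarith
      have hzrw : 1 - bary i z = 2*w - 1 := by rw [hwdef, hbx]; ring
      rw [hzrw] at h1
      -- triangle inequality
      have tri : |u (sgMap k z) - u (ptA i)| ≤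
          Real.sqrt (energy n (u ∘ sgMap k)) * (Real.sqrt (3/2) * (2*w-1) ^ alp)
          + Real.sqrt (energy n (u ∘ sgMap i)) * 1 := by
        have t0 : |u (sgMap k z) - u (ptA i)| ≤
            |u (sgMap k z) - u (sgMap k (ptA i))| + |u (sgMap k (ptA i)) - u (ptA i)| := by
          exact abs_sub_le _ _ _
        rw [mul_one]
        refine le_trans t0 ?_
        have := h1
        nlinarith [h1, h2]
      have h21 : 0 ≤ (2*w - 1) := by linarith
      have hp : 0 ≤ Real.sqrt (3/2) * (2*w-1) ^ alp := by
        have := Real.rpow_nonneg h21 alp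
        positivity
      have cs := sqrt_cs hEc (energy_nonneg n (u ∘ sgMap i)) hp (by norm_num : (0:ℝ) ≤ 1)
      refine le_trans tri (le_trans cs ?_)
      -- now numeric part
      have hEsum : Real.sqrt (energy n (u ∘ sgMap k) + energy n (u ∘ sgMap i))
          ≤ Real.sqrt (3/5) * Real.sqrt (energy (n+1) u) := by
        rw [← Real.sqrt_mul (by norm_num : (0:ℝ) ≤ 3/5)]
        exact Real.sqrt_le_sqrt (energy_pair_le n u hk)
      have hq : (Real.sqrt (3/2) * (2*w-1) ^ alp)^2 + 1^2 = (3/2) * (2*w-1)^(2*alp) + 1 := by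
        rw [mul_pow, Real.sq_sqrt (by norm_num : (0:ℝ) ≤ 3/2), rpow_twice h21]
        ring
      have key2 : Real.sqrt (3/5) * Real.sqrt ((3/2) * (2*w-1)^(2*alp) + 1)
          ≤ Real.sqrt (3/2) * w ^ alp := by
        have inner : (3/5) * ((3/2) * (2*w-1)^(2*alp) + 1) ≤ (3/2) * w^(2*alp) := by
          have hcd := concave_diff beta_pos beta_lt_one (a := w - 1/2) (by linarith) (by linarith)
          rw [half_rpow_beta] at hcd
          have e3 : (w - 1/2 + 1/2) = w := by ring
          rw [e3] at hcd
          have e4 : (w - 1/2)^(2*alp) = (3/5) * (2*w-1)^(2*alp) := by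
            rw [show w - 1/2 = (1/2) * (2*w - 1) by ring,
              Real.mul_rpow (by norm_num : (0:ℝ) ≤ 1/2) h21, half_rpow_beta]
          rw [e4] at hcd
          linarith
        calc Real.sqrt (3/5) * Real.sqrt ((3/2) * (2*w-1)^(2*alp) + 1)
            = Real.sqrt ((3/5) * ((3/2) * (2*w-1)^(2*alp) + 1)) := by
              rw [← Real.sqrt_mul (by norm_num : (0:ℝ) ≤ 3/5)]
          _ ≤ Real.sqrt ((3/2) * w^(2*alp)) := Real.sqrt_le_sqrt inner
          _ = Real.sqrt (3/2) * w ^ alp := by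
              rw [Real.sqrt_mul (by norm_num : (0:ℝ) ≤ 3/2), ← rpow_twice (by linarith : (0:ℝ) ≤ w),
                Real.sqrt_sq (Real.rpow_nonneg (by linarith) alp)]
      rw [hq]
      calc Real.sqrt (energy n (u ∘ sgMap k) + energy n (u ∘ sgMap i))
            * Real.sqrt ((3/2) * (2*w-1)^(2*alp) + 1)
          ≤ (Real.sqrt (3/5) * Real.sqrt (energy (n+1) u))
            * Real.sqrt ((3/2) * (2*w-1)^(2*alp) + 1) := by
            apply mul_le_mul_of_nonneg_right hEsum (Real.sqrt_nonneg _)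
        _ = Real.sqrt (energy (n+1) u) * (Real.sqrt (3/5)
            * Real.sqrt ((3/2) * (2*w-1)^(2*alp) + 1)) := by ring
        _ ≤ Real.sqrt (energy (n+1) u) * (Real.sqrt (3/2) * w ^ alp) := by
            apply mul_le_mul_of_nonneg_left key2 (Real.sqrt_nonneg _)
        _ = Real.sqrt (3/2) * Real.sqrt (energy (n+1) u) * (1 - bary i (sgMap k z)) ^ alp := by
            rw [← hwdef]; ring

lemma norm_ptA_ne {a b : Fin 3} (hab : a ≠ b) : ‖ptA a - ptA b‖ = 1 := by
  fin_cases a <;> fin_cases b <;> first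
  | exact absurd rfl hab
  | exact norm01
  | exact norm02
  | exact norm12
  | (rw [norm_sub_rev]; exact norm01)
  | (rw [norm_sub_rev]; exact norm02)
  | (rw [norm_sub_rev]; exact norm12)

lemma sqrt_const_le : Real.sqrt (3/2) * Real.sqrt (3/5) * Real.sqrt 8 ≤ 6 := by
  rw [← Real.sqrt_mul (by norm_num : (0:ℝ) ≤ 3/2), ← Real.sqrt_mul (by norm_num : (0:ℝ) ≤ 3/2*(3/5))]
  calc Real.sqrt (3/2*(3/5)*8) ≤ Real.sqrt 36 := Real.sqrt_le_sqrt (by norm_num)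
    _ = 6 := by
      rw [show (36:ℝ) = 6^2 by norm_num, Real.sqrt_sq (by norm_num)]

lemma four_div_s3_rpow : (4/Real.sqrt 3) ^ (2*alp) ≤ 4 := by
  have h13 : (1:ℝ) ≤ Real.sqrt 3 := by
    rw [show (1:ℝ) = Real.sqrt 1 by rw [Real.sqrt_one]]
    exact Real.sqrt_le_sqrt (by norm_num)
  have h34 : Real.sqrt 3 ≤ 4 := by
    rw [show (4:ℝ) = Real.sqrt (4^2) by rw [Real.sqrt_sq (by norm_num)]]
    exact Real.sqrt_le_sqrt (by norm_num)
  have hbase : (1:ℝ) ≤ 4/Real.sqrt 3 := by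
    rw [le_div_iff₀ s3pos]; linarith
  calc (4/Real.sqrt 3) ^ (2*alp) ≤ (4/Real.sqrt 3) ^ (1:ℝ) :=
        Real.rpow_le_rpow_of_exponent_le hbase (by linarith [beta_lt_one])
    _ = 4/Real.sqrt 3 := Real.rpow_one _
    _ ≤ 4 := by
      rw [div_le_iff₀ s3pos]; nlinarith

set_option maxHeartbeats 1000000 in
lemma mainAux : ∀ n : ℕ, ∀ u : Pt → ℝ, ∀ x ∈ Vn n, ∀ y ∈ Vn n, x ≠ y →
    |u x - u y| ≤ 6 * Real.sqrt (energy n u) * ‖x - y‖ ^ alp := by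
  intro n
  induction n with
  | zero =>
    intro u x hx y hy hxy
    obtain ⟨a, rfl⟩ := mem_V0 hx
    obtain ⟨b, rfl⟩ := mem_V0 hy
    have hab : a ≠ b := fun h => hxy (by rw [h])
    rw [norm_ptA_ne hab, Real.one_rpow, mul_one]
    have h1 : |u (ptA a) - u (ptA b)| ≤ Real.sqrt (energy 0 u) :=
      abs_le_sqrt_energy (corner_bound 0 u b a)
    nlinarith [Real.sqrt_nonneg (energy 0 u)]
  | succ n ih =>
    intro u x hx y hy hxy
    obtain ⟨i, x', hx', rfl⟩ := mem_Vn_succ.mp hx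
    obtain ⟨j, y', hy', rfl⟩ := mem_Vn_succ.mp hy
    have hE : 0 ≤ energy (n+1) u := energy_nonneg _ _
    have hd0 : (0:ℝ) ≤ ‖sgMap i x' - sgMap j y'‖ := norm_nonneg _
    by_cases hij : i = j
    · subst hij
      have hne : x' ≠ y' := fun h => hxy (by rw [h])
      have h1 := ih (u ∘ sgMap i) x' hx' y' hy' hne
      simp only [Function.comp_apply] at h1
      have hnn : ‖x' - y'‖ = 2 * ‖sgMap i x' - sgMap i y'‖ := by
        rw [norm_sgMap_sub]; ring
      rw [hnn, Real.mul_rpow (by norm_num) (norm_nonneg _), two_rpow_alp] at h1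
      refine le_trans h1 ?_
      have hs := sqrt_energy_cell n u i
      have hr : (0:ℝ) ≤ ‖sgMap i x' - sgMap i y'‖ ^ alp := Real.rpow_nonneg (norm_nonneg _) _
      have h35 : Real.sqrt (3/5) * Real.sqrt (5/3) = 1 := by
        rw [← Real.sqrt_mul (by norm_num : (0:ℝ) ≤ 3/5)]
        norm_num
      calc 6 * Real.sqrt (energy n (u ∘ sgMap i))
            * (Real.sqrt (5/3) * ‖sgMap i x' - sgMap i y'‖ ^ alp)
          = 6 * (Real.sqrt (energy n (u ∘ sgMap i)) * Real.sqrt (5/3))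
            * ‖sgMap i x' - sgMap i y'‖ ^ alp := by ring
        _ ≤ 6 * (Real.sqrt (3/5) * Real.sqrt (energy (n+1) u) * Real.sqrt (5/3))
            * ‖sgMap i x' - sgMap i y'‖ ^ alp := by
            have := mul_le_mul_of_nonneg_right hs (Real.sqrt_nonneg (5/3:ℝ))
            nlinarith [Real.sqrt_nonneg (5/3:ℝ), Real.sqrt_nonneg (energy n (u ∘ sgMap i))]
        _ = 6 * Real.sqrt (energy (n+1) u) * ‖sgMap i x' - sgMap i y'‖ ^ alp
            * (Real.sqrt (3/5) * Real.sqrt (5/3)) := by ring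
        _ = 6 * Real.sqrt (energy (n+1) u) * ‖sgMap i x' - sgMap i y'‖ ^ alp := by
            rw [h35]; ring
    · -- different cells
      set d : ℝ := ‖sgMap i x' - sgMap j y'‖ with hddef
      set m : Pt := sgMap i (ptA j) with hmdef
      have hA := lemQ n (u ∘ sgMap i) j x' hx'
      have hB := lemQ n (u ∘ sgMap j) i y' hy'
      simp only [Function.comp_apply] at hA hB
      rw [show sgMap j (ptA i) = m by rw [hmdef, sgMap_ptA_comm]] at hB
      set w1 : ℝ := 1 - bary j x' with hw1
      set w2 : ℝ := 1 - bary i y' with hw2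
      have hw10 : 0 ≤ w1 := by rw [hw1]; linarith [bary_mem_le_one hx' j]
      have hw20 : 0 ≤ w2 := by rw [hw2]; linarith [bary_mem_le_one hy' i]
      -- distance bounds
      have hdist1 : w1 ≤ 4/Real.sqrt 3 * d := by
        have hby : 1/2 ≤ bary j (sgMap j y') := bary_half hy'
        have hbx : bary j (sgMap i x') = bary j x' / 2 := by
          rw [bary_sgMap, if_neg (fun h => hij h.symm)]; ring
        have hlip := bary_lip j (sgMap j y') (sgMap i x')
        have hrev : ‖sgMap j y' - sgMap i x'‖ = d := by rw [hddef, norm_sub_rev]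
        rw [hrev] at hlip
        have : bary j (sgMap j y') - bary j (sgMap i x') ≤ 2/Real.sqrt 3 * d :=
          le_trans (le_abs_self _) hlip
        rw [hbx] at this
        have hs3 : 0 < Real.sqrt 3 := s3pos
        rw [div_mul_eq_mul_div, le_div_iff₀ hs3]
        rw [div_mul_eq_mul_div, le_div_iff₀ hs3] at this
        nlinarith
      have hdist2 : w2 ≤ 4/Real.sqrt 3 * d := by
        have hbxx : 1/2 ≤ bary i (sgMap i x') := bary_half hx'
        have hby : bary i (sgMap j y') = bary i y' / 2 := by
          rw [bary_sgMap, if_neg hij]; ring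
        have hlip := bary_lip i (sgMap i x') (sgMap j y')
        have : bary i (sgMap i x') - bary i (sgMap j y') ≤ 2/Real.sqrt 3 * d :=
          le_trans (le_abs_self _) hlip
        rw [hby] at this
        have hs3 : 0 < Real.sqrt 3 := s3pos
        rw [div_mul_eq_mul_div, le_div_iff₀ hs3]
        rw [div_mul_eq_mul_div, le_div_iff₀ hs3] at this
        nlinarith
      -- triangle + Cauchy-Schwarz
      have tri : |u (sgMap i x') - u (sgMap j y')| ≤
          Real.sqrt (energy n (u ∘ sgMap i)) * (Real.sqrt (3/2) * w1 ^ alp)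
          + Real.sqrt (energy n (u ∘ sgMap j)) * (Real.sqrt (3/2) * w2 ^ alp) := by
        have t0 := abs_sub_le (u (sgMap i x')) (u m) (u (sgMap j y'))
        have t1 : |u m - u (sgMap j y')| = |u (sgMap j y') - u m| := abs_sub_comm _ _
        rw [t1] at t0
        refine le_trans t0 ?_
        nlinarith [hA, hB]
      have hp1 : 0 ≤ Real.sqrt (3/2) * w1 ^ alp := by
        have := Real.rpow_nonneg hw10 alp; positivity
      have hp2 : 0 ≤ Real.sqrt (3/2) * w2 ^ alp := by
        have := Real.rpow_nonneg hw20 alp; positivity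
      have cs := sqrt_cs (energy_nonneg n (u ∘ sgMap i)) (energy_nonneg n (u ∘ sgMap j)) hp1 hp2
      refine le_trans tri (le_trans cs ?_)
      have hEsum : Real.sqrt (energy n (u ∘ sgMap i) + energy n (u ∘ sgMap j))
          ≤ Real.sqrt (3/5) * Real.sqrt (energy (n+1) u) := by
        rw [← Real.sqrt_mul (by norm_num : (0:ℝ) ≤ 3/5)]
        exact Real.sqrt_le_sqrt (energy_pair_le n u hij)
      have hsq : (Real.sqrt (3/2) * w1 ^ alp)^2 + (Real.sqrt (3/2) * w2 ^ alp)^2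
          = (3/2) * (w1^(2*alp) + w2^(2*alp)) := by
        rw [mul_pow, mul_pow, Real.sq_sqrt (by norm_num : (0:ℝ) ≤ 3/2),
          rpow_twice hw10, rpow_twice hw20]
        ring
      have hwbound : w1^(2*alp) + w2^(2*alp) ≤ 8 * d^(2*alp) := by
        have hc : (0:ℝ) ≤ 4/Real.sqrt 3 := by positivity
        have h1 : w1^(2*alp) ≤ (4/Real.sqrt 3 * d)^(2*alp) :=
          Real.rpow_le_rpow hw10 hdist1 (by linarith [beta_pos])
        have h2 : w2^(2*alp) ≤ (4/Real.sqrt 3 * d)^(2*alp) :=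
          Real.rpow_le_rpow hw20 hdist2 (by linarith [beta_pos])
        have h3 : (4/Real.sqrt 3 * d)^(2*alp) = (4/Real.sqrt 3)^(2*alp) * d^(2*alp) :=
          Real.mul_rpow hc hd0
        have h4 : (4/Real.sqrt 3)^(2*alp) * d^(2*alp) ≤ 4 * d^(2*alp) :=
          mul_le_mul_of_nonneg_right four_div_s3_rpow (Real.rpow_nonneg hd0 _)
        rw [h3] at h1 h2
        linarith
      have hdb : Real.sqrt (d^(2*alp)) = d ^ alp := by
        rw [← rpow_twice hd0, Real.sqrt_sq (Real.rpow_nonneg hd0 alp)]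
      calc Real.sqrt (energy n (u ∘ sgMap i) + energy n (u ∘ sgMap j))
            * Real.sqrt ((Real.sqrt (3/2) * w1 ^ alp)^2 + (Real.sqrt (3/2) * w2 ^ alp)^2)
          ≤ (Real.sqrt (3/5) * Real.sqrt (energy (n+1) u))
            * Real.sqrt ((3/2) * (w1^(2*alp) + w2^(2*alp))) := by
            rw [hsq]
            apply mul_le_mul_of_nonneg_right hEsum (Real.sqrt_nonneg _)
        _ ≤ (Real.sqrt (3/5) * Real.sqrt (energy (n+1) u))
            * Real.sqrt ((3/2) * (8 * d^(2*alp))) := by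
            apply mul_le_mul_of_nonneg_left
              (Real.sqrt_le_sqrt (mul_le_mul_of_nonneg_left hwbound (by norm_num))) (by positivity)
        _ = (Real.sqrt (3/2) * Real.sqrt (3/5) * Real.sqrt 8) * Real.sqrt (energy (n+1) u)
            * d ^ alp := by
            rw [Real.sqrt_mul (by norm_num : (0:ℝ) ≤ 3/2), Real.sqrt_mul (by norm_num : (0:ℝ) ≤ 8), hdb]
            ring
        _ ≤ 6 * Real.sqrt (energy (n+1) u) * d ^ alp := by
            apply mul_le_mul_of_nonneg_right _ (Real.rpow_nonneg hd0 alp)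
            exact mul_le_mul_of_nonneg_right sqrt_const_le (Real.sqrt_nonneg _)


/-- With `α = log(5/3)/log 4`: for every `n`, every `f : Vₙ → ℝ` and all distinct
`x, y ∈ Vₙ`, one has `|f(x) − f(y)| ≤ 6 √(𝓔ₙ(f,f)) ‖x−y‖^α`. -/
theorem statement5 (n : ℕ) (u : Pt → ℝ) :
    ∀ x ∈ Vn n, ∀ y ∈ Vn n, x ≠ y →
      |u x - u y| ≤
        6 * Real.sqrt (energy n u) * ‖x - y‖ ^ (Real.log (5 / 3) / Real.log 4) := by
  intro x hx y hy hxy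
  exact mainAux n u x hx y hy hxy

end
end

section
/- Fix n ≥ 0 and φ > 0, and let ν_φ be the product probability measure on Ω_n = ℕ^{V_n} whose one-site marginals are p_φ(k) = Z(φ)^{−1} φ^k / h(k)!. Then ν_φ is invariant for the zero-range generator: for every bounded function F : Ω_n → ℝ, the function L_n F is ν_φ-integrable and ∫ L_n F dν_φ = 0, where L_n F(η) = Σ_{(x,y) : {x,y}∈E_n} h(η(x)) [F(η^{xy}) − F(η)], the sum runs over ordered pairs (x,y) with {x,y} an edge of E_n, and η^{xy} is the configuration obtained from η by decreasing η(x) by 1 and increasing η(y) by 1 (with η^{xy}(z)=η(z) for z≠x,y). -/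
open Set MeasureTheory Filter Topology
open scoped Classical ENNReal NNReal BoundedContinuousFunction

noncomputable section

section ZRAux

variable {ε₀ φ : ℝ} {h : ℕ → ℝ}

lemma zr_h_pos (hε0 : 0 < ε₀)
    (hlin : ∀ k : ℕ, 1 ≤ k → ε₀ * k ≤ h k ∧ h k ≤ ε₀⁻¹ * k) {k : ℕ} (hk : 1 ≤ k) :
    0 < h k := by
  have h1 := (hlin k hk).1
  have h2 : (1 : ℝ) ≤ (k : ℝ) := by exact_mod_cast hk
  nlinarith

lemma zr_hfact_pos (hε0 : 0 < ε₀)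
    (hlin : ∀ k : ℕ, 1 ≤ k → ε₀ * k ≤ h k ∧ h k ≤ ε₀⁻¹ * k) (k : ℕ) :
    0 < hfact h k :=
  Finset.prod_pos fun i _ => zr_h_pos hε0 hlin (by omega)

lemma zr_hfact_ge (hε0 : 0 < ε₀)
    (hlin : ∀ k : ℕ, 1 ≤ k → ε₀ * k ≤ h k ∧ h k ≤ ε₀⁻¹ * k) (k : ℕ) :
    ε₀ ^ k * (Nat.factorial k : ℝ) ≤ hfact h k := by
  have hEq : ε₀ ^ k * (Nat.factorial k : ℝ) = ∏ i ∈ Finset.range k, (ε₀ * ((i : ℝ) + 1)) := by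
    rw [Finset.prod_mul_distrib, Finset.prod_const, Finset.card_range]
    congr 1
    rw [← Finset.prod_range_add_one_eq_factorial]
    push_cast
    rfl
  rw [hEq, hfact]
  apply Finset.prod_le_prod
  · intro i _
    positivity
  · intro i _
    have := (hlin (i + 1) (by omega)).1
    push_cast at this ⊢
    linarith

lemma zr_Z_summable (hε0 : 0 < ε₀)
    (hlin : ∀ k : ℕ, 1 ≤ k → ε₀ * k ≤ h k ∧ h k ≤ ε₀⁻¹ * k) (hφ : 0 ≤ φ) :
    Summable (fun k => φ ^ k / hfact h k) := by
  refine Summable.of_nonneg_of_le (fun k => ?_) (fun k => ?_)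
    (Real.summable_pow_div_factorial (φ / ε₀))
  · have := zr_hfact_pos hε0 hlin k
    positivity
  · have h1 := zr_hfact_ge hε0 hlin k
    have h2 : (0 : ℝ) < ε₀ ^ k * (Nat.factorial k : ℝ) := by positivity
    have h3 : (φ / ε₀) ^ k / (Nat.factorial k : ℝ) = φ ^ k / (ε₀ ^ k * (Nat.factorial k : ℝ)) := by
      rw [div_pow, div_div]
    rw [h3]
    gcongr


lemma zr_Zfun_pos (hε0 : 0 < ε₀)
    (hlin : ∀ k : ℕ, 1 ≤ k → ε₀ * k ≤ h k ∧ h k ≤ ε₀⁻¹ * k) (hφ : 0 ≤ φ) :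
    0 < Zfun h φ := by
  have hs := zr_Z_summable hε0 hlin hφ
  refine Summable.tsum_pos hs (fun k => ?_) 0 ?_
  · have := zr_hfact_pos hε0 hlin k
    positivity
  · simp [hfact]

lemma zr_pmarg_pos (hε0 : 0 < ε₀)
    (hlin : ∀ k : ℕ, 1 ≤ k → ε₀ * k ≤ h k ∧ h k ≤ ε₀⁻¹ * k) (hφ : 0 < φ) (k : ℕ) :
    0 < pmarg h φ k := by
  have h1 := zr_Zfun_pos hε0 hlin hφ.le
  have h2 := zr_hfact_pos hε0 hlin k
  rw [pmarg]
  positivity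

lemma zr_pmarg_key (hε0 : 0 < ε₀)
    (hlin : ∀ k : ℕ, 1 ≤ k → ε₀ * k ≤ h k ∧ h k ≤ ε₀⁻¹ * k) (hφ : 0 < φ) (k : ℕ) :
    h (k + 1) * pmarg h φ (k + 1) = φ * pmarg h φ k := by
  have hZ := (zr_Zfun_pos hε0 hlin hφ.le).ne'
  have hf1 : hfact h (k + 1) = hfact h k * h (k + 1) := Finset.prod_range_succ _ _
  have hh : h (k + 1) ≠ 0 := (zr_h_pos hε0 hlin (by omega)).ne'
  have hfk : hfact h k ≠ 0 := (zr_hfact_pos hε0 hlin k).ne'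
  rw [pmarg, pmarg, hf1, pow_succ]
  field_simp


lemma zr_prod_comp_update {ι : Type*} [Fintype ι] [DecidableEq ι] (p : ℕ → ℝ)
    (σ : ι → ℕ) (x : ι) (v : ℕ) :
    ∏ z, p (Function.update σ x v z) = p v * ∏ z ∈ Finset.univ \ {x}, p (σ z) := by
  have h1 : (fun z => p (Function.update σ x v z))
      = Function.update (fun z => p (σ z)) x (p v) := by
    funext z
    rcases eq_or_ne z x with rfl | hz
    · simp
    · simp [Function.update_of_ne hz]
  calc ∏ z, p (Function.update σ x v z)
      = ∏ z, Function.update (fun z => p (σ z)) x (p v) z :=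
        Finset.prod_congr rfl (fun z _ => congrFun h1 z)
    _ = p v * ∏ z ∈ Finset.univ \ {x}, p (σ z) :=
        Finset.prod_update_of_mem (Finset.mem_univ x) _ _

lemma zr_up_weight (hε0 : 0 < ε₀)
    (hlin : ∀ k : ℕ, 1 ≤ k → ε₀ * k ≤ h k ∧ h k ≤ ε₀⁻¹ * k) (hφ : 0 < φ)
    {ι : Type*} [Fintype ι] [DecidableEq ι] (x : ι) (σ : ι → ℕ) :
    h (σ x + 1) * ∏ z, pmarg h φ (Function.update σ x (σ x + 1) z)
      = φ * ∏ z, pmarg h φ (σ z) := by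
  rw [zr_prod_comp_update]
  rw [← Finset.mul_prod_erase Finset.univ (fun z => pmarg h φ (σ z)) (Finset.mem_univ x),
      Finset.erase_eq]
  have k1 := zr_pmarg_key hε0 hlin hφ (σ x)
  set R := ∏ z ∈ Finset.univ \ {x}, pmarg h φ (σ z) with hR
  linear_combination R * k1

lemma zr_move_weight (hε0 : 0 < ε₀)
    (hlin : ∀ k : ℕ, 1 ≤ k → ε₀ * k ≤ h k ∧ h k ≤ ε₀⁻¹ * k) (hφ : 0 < φ)
    {ι : Type*} [Fintype ι] [DecidableEq ι] {x y : ι} (hxy : x ≠ y)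
    (η : ι → ℕ) (hx : η x ≠ 0) :
    h (η y + 1) * ∏ z, pmarg h φ (Function.update (Function.update η x (η x - 1)) y (η y + 1) z)
      = h (η x) * ∏ z, pmarg h φ (η z) := by
  obtain ⟨m, hm⟩ : ∃ m, η x = m + 1 := ⟨η x - 1, by omega⟩
  have hxmem : x ∈ Finset.univ \ {y} := Finset.mem_sdiff.mpr ⟨Finset.mem_univ x, by simp [hxy]⟩
  have hA : ∏ z, pmarg h φ (Function.update (Function.update η x (η x - 1)) y (η y + 1) z)
      = pmarg h φ (η y + 1)
        * ∏ z ∈ Finset.univ \ {y}, pmarg h φ (Function.update η x (η x - 1) z) := by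
    have := zr_prod_comp_update (pmarg h φ) (Function.update η x (η x - 1)) y (η y + 1)
    simpa [Function.update_of_ne hxy.symm] using this
  have hA2 : ∏ z ∈ Finset.univ \ {y}, pmarg h φ (Function.update η x (η x - 1) z)
      = pmarg h φ (η x - 1) * ∏ z ∈ (Finset.univ \ {y}) \ {x}, pmarg h φ (η z) := by
    have h1 : (fun z => pmarg h φ (Function.update η x (η x - 1) z))
        = Function.update (fun z => pmarg h φ (η z)) x (pmarg h φ (η x - 1)) := by
      funext z
      rcases eq_or_ne z x with rfl | hz
      · simp
      · simp [Function.update_of_ne hz]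
    calc ∏ z ∈ Finset.univ \ {y}, pmarg h φ (Function.update η x (η x - 1) z)
        = ∏ z ∈ Finset.univ \ {y},
            Function.update (fun z => pmarg h φ (η z)) x (pmarg h φ (η x - 1)) z :=
          Finset.prod_congr rfl (fun z _ => congrFun h1 z)
      _ = pmarg h φ (η x - 1) * ∏ z ∈ (Finset.univ \ {y}) \ {x}, pmarg h φ (η z) :=
          Finset.prod_update_of_mem hxmem _ _
  have hB : ∏ z, pmarg h φ (η z)
      = pmarg h φ (η y) * (pmarg h φ (η x)
          * ∏ z ∈ (Finset.univ \ {y}) \ {x}, pmarg h φ (η z)) := by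
    rw [← Finset.mul_prod_erase Finset.univ (fun z => pmarg h φ (η z)) (Finset.mem_univ y),
        Finset.erase_eq,
        ← Finset.mul_prod_erase (Finset.univ \ {y}) (fun z => pmarg h φ (η z)) hxmem,
        Finset.erase_eq]
  rw [hA, hA2, hB, hm]
  simp only [Nat.add_sub_cancel]
  have k1 := zr_pmarg_key hε0 hlin hφ (η y)
  have k2 := zr_pmarg_key hε0 hlin hφ m
  set R := ∏ z ∈ (Finset.univ \ {y}) \ {x}, pmarg h φ (η z) with hR
  linear_combination (pmarg h φ m * R) * k1 - (pmarg h φ (η y) * R) * k2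

end ZRAux

/-- The product measure on `Ωₙ = ℕ^{Vₙ}` with one-site marginals `p_φ` is
invariant for the zero-range generator: for every bounded `F : Ωₙ → ℝ`, `LₙF` is
integrable and `∫ LₙF dν_φ = 0`. -/
theorem statement16 (n : ℕ) (φ : ℝ) (hφ : 0 < φ)
    (ε₀ : ℝ) (hε : ε₀ ∈ Set.Ioc (0 : ℝ) 1) (h : ℕ → ℝ) (h0 : h 0 = 0)
    (hlin : ∀ k : ℕ, 1 ≤ k → ε₀ * k ≤ h k ∧ h k ≤ ε₀⁻¹ * k)
    (ν : Measure (↥(Vn n) → ℕ)) (hprob : IsProbabilityMeasure ν)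
    (hν : ∀ σ : ↥(Vn n) → ℕ, ν {σ} = ∏ x : ↥(Vn n), ENNReal.ofReal (pmarg h φ (σ x)))
    (F : (↥(Vn n) → ℕ) → ℝ) (hF : ∃ C : ℝ, ∀ η, |F η| ≤ C) :
    Integrable (zrGen n h F) ν ∧ ∫ η, zrGen n h F η ∂ν = 0 := by
  classical
  obtain ⟨hε0, hε1⟩ := hε
  obtain ⟨C, hC⟩ := hF
  have hC0 : 0 ≤ C := (abs_nonneg _).trans (hC fun _ => 0)
  have hφ0 : 0 ≤ φ := hφ.le
  have hhnn : ∀ k, 0 ≤ h k := by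
    intro k
    cases k with
    | zero => simp [h0]
    | succ m => exact (zr_h_pos hε0 hlin (by omega)).le
  have hppos : ∀ k, 0 < pmarg h φ k := zr_pmarg_pos hε0 hlin hφ
  -- measure facts
  have hν' : ∀ σ : ↥(Vn n) → ℕ, ν {σ} = ENNReal.ofReal (∏ x, pmarg h φ (σ x)) := by
    intro σ
    rw [hν, ENNReal.ofReal_prod_of_nonneg (fun i _ => (hppos _).le)]
  have hν0 : ∀ σ : ↥(Vn n) → ℕ, ν {σ} ≠ 0 := by
    intro σ
    rw [hν']
    simp only [ne_eq, ENNReal.ofReal_eq_zero, not_le]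
    exact Finset.prod_pos fun i _ => hppos _
  have hwval : ∀ σ : ↥(Vn n) → ℕ, (ν {σ}).toReal = ∏ x, pmarg h φ (σ x) := by
    intro σ
    rw [hν', ENNReal.toReal_ofReal (Finset.prod_nonneg fun i _ => (hppos _).le)]
  have hwpos : ∀ σ : ↥(Vn n) → ℕ, 0 < (ν {σ}).toReal := by
    intro σ
    rw [hwval]
    exact Finset.prod_pos fun i _ => hppos _
  -- edge facts
  have hedge_ne : ∀ x y : ↥(Vn n), isEdge n x.1 y.1 → x ≠ y := by
    intro x y he heq
    rw [heq] at he
    simp only [isEdge, sub_self, norm_zero] at he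
    exact absurd he.symm (zpow_ne_zero _ two_ne_zero)
  have hedge_symm : ∀ x y : Pt, isEdge n x y → isEdge n y x := by
    intro x y he
    rw [isEdge, norm_sub_rev]
    exact he
  -- total mass
  have huniv : ∑' σ : ↥(Vn n) → ℕ, ν {σ} = 1 := by
    have hd : Pairwise (Function.onFun Disjoint fun σ : ↥(Vn n) → ℕ => ({σ} : Set (↥(Vn n) → ℕ))) := by
      intro a b hab
      simpa [Function.onFun] using hab
    have := (measure_iUnion hd (fun σ => measurableSet_singleton σ) : ν (⋃ σ, {σ}) = _)
    rw [Set.iUnion_of_singleton] at this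
    rw [← this, measure_univ]
  -- master lemma
  have master : ∀ x : ↥(Vn n),
      ∑' η : ↥(Vn n) → ℕ, ENNReal.ofReal (h (η x)) * ν {η} = ENNReal.ofReal φ := by
    intro x
    have hbij : ∑' η : ↥(Vn n) → ℕ, ENNReal.ofReal (h (η x)) * ν {η}
        = ∑' σ : ↥(Vn n) → ℕ, ENNReal.ofReal φ * ν {σ} := by
      apply tsum_eq_tsum_of_ne_zero_bij
        (fun σ => Function.update σ.1 x (σ.1 x + 1))
      · intro a b hab
        apply Subtype.ext
        funext z
        rcases eq_or_ne z x with rfl | hz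
        · have := congrFun hab z
          simpa using this
        · have := congrFun hab z
          simpa [Function.update_of_ne hz] using this
      · intro η hη
        simp only [Function.mem_support] at hη
        have hx0 : η x ≠ 0 := by
          intro h'
          exact hη (by rw [h', h0]; simp)
        refine ⟨⟨Function.update η x (η x - 1), ?_⟩, ?_⟩
        · simp only [Function.mem_support]
          exact mul_ne_zero (by simpa [ENNReal.ofReal_eq_zero, not_le] using hφ) (hν0 _)
        · funext z
          rcases eq_or_ne z x with rfl | hz
          · simp only [Function.update_self]
            omega
          · simp [Function.update_of_ne hz]
      · intro σ
        rw [hν', hν', Function.update_self,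
          ← ENNReal.ofReal_mul (hhnn _), ← ENNReal.ofReal_mul hφ0]
        congr 1
        exact zr_up_weight hε0 hlin hφ x σ.1
    rw [hbij, ENNReal.tsum_mul_left, huniv, mul_one]
  -- summability per site
  have hsumh : ∀ x : ↥(Vn n),
      Summable (fun η : ↥(Vn n) → ℕ => h (η x) * (ν {η}).toReal) := by
    intro x
    have hne : ∑' η : ↥(Vn n) → ℕ, ENNReal.ofReal (h (η x)) * ν {η} ≠ ⊤ := by
      rw [master x]
      exact ENNReal.ofReal_ne_top
    refine (ENNReal.summable_toReal hne).congr fun η => ?_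
    rw [ENNReal.toReal_mul, ENNReal.toReal_ofReal (hhnn _)]
  -- measurability
  have hmeas : ∀ g : (↥(Vn n) → ℕ) → ℝ, AEStronglyMeasurable g ν :=
    fun g => (measurable_of_countable g).aestronglyMeasurable
  -- integrability of site functions
  have hinth : ∀ x : ↥(Vn n), Integrable (fun η : ↥(Vn n) → ℕ => h (η x)) ν := by
    intro x
    refine ⟨hmeas _, ?_⟩
    rw [hasFiniteIntegral_iff_norm]
    have heq : ∀ η : ↥(Vn n) → ℕ, ENNReal.ofReal ‖h (η x)‖ = ENNReal.ofReal (h (η x)) :=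
      fun η => by rw [Real.norm_of_nonneg (hhnn _)]
    calc ∫⁻ η, ENNReal.ofReal ‖h (η x)‖ ∂ν
        = ∑' η : ↥(Vn n) → ℕ, ENNReal.ofReal ‖h (η x)‖ * ν {η} := lintegral_countable' _
      _ = ∑' η : ↥(Vn n) → ℕ, ENNReal.ofReal (h (η x)) * ν {η} := by
          exact tsum_congr fun η => by rw [heq]
      _ = ENNReal.ofReal φ := master x
      _ < ⊤ := ENNReal.ofReal_lt_top
  -- pointwise bound
  have habs : ∀ η : ↥(Vn n) → ℕ, |zrGen n h F η|
      ≤ ∑ x : ↥(Vn n), ∑ y : ↥(Vn n),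
          if isEdge n x.1 y.1 then 2 * C * h (η x) else 0 := by
    intro η
    rw [zrGen]
    refine (Finset.abs_sum_le_sum_abs _ _).trans (Finset.sum_le_sum fun x _ => ?_)
    refine (Finset.abs_sum_le_sum_abs _ _).trans (Finset.sum_le_sum fun y _ => ?_)
    split_ifs with he
    · rw [abs_mul, abs_of_nonneg (hhnn _)]
      have hd : |F (Function.update (Function.update η x (η x - 1)) y (η y + 1)) - F η|
          ≤ 2 * C := by
        have h1 := hC (Function.update (Function.update η x (η x - 1)) y (η y + 1))
        have h2 := hC η
        calc |F (Function.update (Function.update η x (η x - 1)) y (η y + 1)) - F η|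
            ≤ |F (Function.update (Function.update η x (η x - 1)) y (η y + 1))| + |F η| :=
              abs_sub _ _
          _ ≤ 2 * C := by linarith
      calc h (η x) * |F (Function.update (Function.update η x (η x - 1)) y (η y + 1)) - F η|
          ≤ h (η x) * (2 * C) := mul_le_mul_of_nonneg_left hd (hhnn _)
        _ = 2 * C * h (η x) := by ring
    · simp
  -- dominating function is integrable
  have hintg : Integrable (fun η : ↥(Vn n) → ℕ => ∑ x : ↥(Vn n), ∑ y : ↥(Vn n),
      if isEdge n x.1 y.1 then 2 * C * h (η x) else 0) ν := by
    apply integrable_finset_sum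
    intro x _
    apply integrable_finset_sum
    intro y _
    by_cases he : isEdge n x.1 y.1
    · simp only [if_pos he]
      exact (hinth x).const_mul (2 * C)
    · simp only [if_neg he]
      exact integrable_zero _ _ _
  have hint : Integrable (zrGen n h F) ν := by
    refine Integrable.mono' hintg (hmeas _) ?_
    filter_upwards with η
    rw [Real.norm_eq_abs]
    exact habs η
  refine ⟨hint, ?_⟩
  -- summability of weighted functionals
  have hsumG : ∀ (x : ↥(Vn n)) (G : (↥(Vn n) → ℕ) → ℝ), (∀ η, |G η| ≤ C) →
      Summable (fun η : ↥(Vn n) → ℕ => (ν {η}).toReal * (h (η x) * G η)) := by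
    intro x G hG
    apply Summable.of_abs
    refine Summable.of_nonneg_of_le (fun _ => abs_nonneg _) (fun η => ?_)
      ((hsumh x).mul_left C)
    rw [abs_mul, abs_mul, abs_of_nonneg (hwpos η).le, abs_of_nonneg (hhnn _)]
    calc (ν {η}).toReal * (h (η x) * |G η|)
        ≤ (ν {η}).toReal * (h (η x) * C) := by
          apply mul_le_mul_of_nonneg_left _ (hwpos η).le
          exact mul_le_mul_of_nonneg_left (hG η) (hhnn _)
      _ = C * (h (η x) * (ν {η}).toReal) := by ring
  -- the per-pair change of variables
  have hpair : ∀ x y : ↥(Vn n), x ≠ y →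
      ∑' η : ↥(Vn n) → ℕ, (ν {η}).toReal
          * (h (η x) * F (Function.update (Function.update η x (η x - 1)) y (η y + 1)))
        = ∑' η : ↥(Vn n) → ℕ, (ν {η}).toReal * (h (η y) * F η) := by
    intro x y hxy
    have hmove : ∀ σ : ↥(Vn n) → ℕ, σ y ≠ 0 →
        Function.update (Function.update
            (Function.update (Function.update σ y (σ y - 1)) x (σ x + 1)) x
            ((Function.update (Function.update σ y (σ y - 1)) x (σ x + 1)) x - 1)) y
            ((Function.update (Function.update σ y (σ y - 1)) x (σ x + 1)) y + 1) = σ := by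
      intro σ hy0
      funext z
      rcases eq_or_ne z y with rfl | hzy
      · simp only [Function.update_self, Function.update_of_ne hxy.symm]
        omega
      · rcases eq_or_ne z x with rfl | hzx
        · simp only [Function.update_of_ne hxy, Function.update_self]
          omega
        · simp only [Function.update_of_ne hzy, Function.update_of_ne hzx]
    apply tsum_eq_tsum_of_ne_zero_bij
      (fun σ => Function.update (Function.update σ.1 y (σ.1 y - 1)) x (σ.1 x + 1))
    · intro a b hab
      have hay : a.1 y ≠ 0 := by
        intro h'
        exact a.2 (by simp only [h', h0]; ring)
      have hby : b.1 y ≠ 0 := by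
        intro h'
        exact b.2 (by simp only [h', h0]; ring)
      apply Subtype.ext
      have hab' : Function.update (Function.update a.1 y (a.1 y - 1)) x (a.1 x + 1)
          = Function.update (Function.update b.1 y (b.1 y - 1)) x (b.1 x + 1) := hab
      have hstep : Function.update (Function.update
            (Function.update (Function.update a.1 y (a.1 y - 1)) x (a.1 x + 1)) x
            ((Function.update (Function.update a.1 y (a.1 y - 1)) x (a.1 x + 1)) x - 1)) y
            ((Function.update (Function.update a.1 y (a.1 y - 1)) x (a.1 x + 1)) y + 1)
          = Function.update (Function.update
            (Function.update (Function.update b.1 y (b.1 y - 1)) x (b.1 x + 1)) x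
            ((Function.update (Function.update b.1 y (b.1 y - 1)) x (b.1 x + 1)) x - 1)) y
            ((Function.update (Function.update b.1 y (b.1 y - 1)) x (b.1 x + 1)) y + 1) := by
        rw [hab']
      exact (hmove a.1 hay).symm.trans (hstep.trans (hmove b.1 hby))
    · intro η hη
      simp only [Function.mem_support] at hη
      have hwne := (hwpos η).ne'
      have hx0 : η x ≠ 0 := by
        intro h'
        exact hη (by simp only [h', h0]; ring)
      have hF0 : F (Function.update (Function.update η x (η x - 1)) y (η y + 1)) ≠ 0 := by
        intro h'
        exact hη (by rw [h']; ring)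
      refine ⟨⟨Function.update (Function.update η x (η x - 1)) y (η y + 1), ?_⟩, ?_⟩
      · simp only [Function.mem_support]
        refine mul_ne_zero (hwpos _).ne' (mul_ne_zero ?_ hF0)
        rw [Function.update_self]
        exact (zr_h_pos hε0 hlin (by omega)).ne'
      · funext z
        rcases eq_or_ne z x with rfl | hzx
        · simp only [Function.update_self, Function.update_of_ne hxy]
          omega
        · rcases eq_or_ne z y with rfl | hzy
          · simp only [Function.update_of_ne hxy.symm, Function.update_self]
            omega
          · simp only [Function.update_of_ne hzx, Function.update_of_ne hzy]
    · intro σ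
      have hy0 : σ.1 y ≠ 0 := by
        intro h'
        exact σ.2 (by simp only [h', h0]; ring)
      have hkey := zr_move_weight hε0 hlin hφ hxy.symm σ.1 hy0
      rw [hmove σ.1 hy0]
      have hxval : (Function.update (Function.update σ.1 y (σ.1 y - 1)) x (σ.1 x + 1)) x
          = σ.1 x + 1 := Function.update_self _ _ _
      rw [hxval, hwval, hwval]
      linear_combination F σ.1 * hkey
  -- expand the integral
  rw [integral_countable' hint]
  simp only [measureReal_def]
  have expand : ∀ η : ↥(Vn n) → ℕ, (ν {η}).toReal • zrGen n h F η
      = ∑ x : ↥(Vn n), ∑ y : ↥(Vn n),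
          if isEdge n x.1 y.1 then
            (ν {η}).toReal * (h (η x)
              * (F (Function.update (Function.update η x (η x - 1)) y (η y + 1)) - F η))
          else 0 := by
    intro η
    rw [smul_eq_mul, zrGen, Finset.mul_sum]
    refine Finset.sum_congr rfl fun x _ => ?_
    rw [Finset.mul_sum]
    refine Finset.sum_congr rfl fun y _ => ?_
    split_ifs with he
    · ring
    · ring
  have hsumpair : ∀ x y : ↥(Vn n),
      Summable (fun η : ↥(Vn n) → ℕ =>
        if isEdge n x.1 y.1 then
          (ν {η}).toReal * (h (η x)
            * (F (Function.update (Function.update η x (η x - 1)) y (η y + 1)) - F η))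
        else 0) := by
    intro x y
    by_cases he : isEdge n x.1 y.1
    · simp only [if_pos he]
      have h1 : Summable (fun η : ↥(Vn n) → ℕ => (ν {η}).toReal
          * (h (η x) * F (Function.update (Function.update η x (η x - 1)) y (η y + 1)))) :=
        hsumG x _ (fun η => hC _)
      have h2 := hsumG x F hC
      refine (h1.sub h2).congr fun η => ?_
      ring
    · simp only [if_neg he]
      exact summable_zero
  rw [tsum_congr expand,
    Summable.tsum_finsetSum (fun x _ => summable_sum (fun y _ => hsumpair x y))]
  have hterm : ∀ x : ↥(Vn n),
      ∑' η : ↥(Vn n) → ℕ, ∑ y : ↥(Vn n),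
        (if isEdge n x.1 y.1 then
          (ν {η}).toReal * (h (η x)
            * (F (Function.update (Function.update η x (η x - 1)) y (η y + 1)) - F η))
        else 0)
      = ∑ y : ↥(Vn n), ∑' η : ↥(Vn n) → ℕ,
        (if isEdge n x.1 y.1 then
          (ν {η}).toReal * (h (η x)
            * (F (Function.update (Function.update η x (η x - 1)) y (η y + 1)) - F η))
        else 0) := fun x => Summable.tsum_finsetSum (fun y _ => hsumpair x y)
  rw [Finset.sum_congr rfl (fun x _ => hterm x)]
  -- evaluate each pair
  set S : ↥(Vn n) → ℝ :=
    fun z => ∑' η : ↥(Vn n) → ℕ, (ν {η}).toReal * (h (η z) * F η) with hS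
  have hval : ∀ x y : ↥(Vn n),
      (∑' η : ↥(Vn n) → ℕ,
        (if isEdge n x.1 y.1 then
          (ν {η}).toReal * (h (η x)
            * (F (Function.update (Function.update η x (η x - 1)) y (η y + 1)) - F η))
        else 0))
      = (if isEdge n x.1 y.1 then S y else 0) - (if isEdge n x.1 y.1 then S x else 0) := by
    intro x y
    by_cases he : isEdge n x.1 y.1
    · simp only [if_pos he]
      have h1 : Summable (fun η : ↥(Vn n) → ℕ => (ν {η}).toReal
          * (h (η x) * F (Function.update (Function.update η x (η x - 1)) y (η y + 1)))) :=
        hsumG x _ (fun η => hC _)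
      have h2 := hsumG x F hC
      have hsplit : ∀ η : ↥(Vn n) → ℕ,
          (ν {η}).toReal * (h (η x)
            * (F (Function.update (Function.update η x (η x - 1)) y (η y + 1)) - F η))
          = (ν {η}).toReal
              * (h (η x) * F (Function.update (Function.update η x (η x - 1)) y (η y + 1)))
            - (ν {η}).toReal * (h (η x) * F η) := fun η => by ring
      rw [tsum_congr hsplit, Summable.tsum_sub h1 h2, hpair x y (hedge_ne x y he)]
    · simp only [if_neg he, tsum_zero, sub_zero]
  rw [Finset.sum_congr rfl (fun x _ => Finset.sum_congr rfl (fun y _ => hval x y))]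
  simp only [Finset.sum_sub_distrib]
  have hflip : ∑ x : ↥(Vn n), ∑ y : ↥(Vn n), (if isEdge n x.1 y.1 then S y else 0)
      = ∑ x : ↥(Vn n), ∑ y : ↥(Vn n), (if isEdge n x.1 y.1 then S x else 0) := by
    rw [Finset.sum_comm]
    refine Finset.sum_congr rfl fun x _ => Finset.sum_congr rfl fun y _ => ?_
    have hiff : isEdge n y.1 x.1 ↔ isEdge n x.1 y.1 :=
      ⟨hedge_symm _ _, hedge_symm _ _⟩
    exact if_congr hiff rfl rfl
  rw [hflip, sub_self]

end
end
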